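/- arXiv:1607.00472 — 2 statements merged into one kernel-verified Lean document; each statement's English description precedes it below -/
import Mathlib

section
/- Every simple connected graph G of order n ≥ 2 that contains no cycle of odd length (equivalently, that is bipartite) satisfies b•(G) = 0; that is, G admits an energy orientation with no black arcs. -/
/-- `D` is an orientation of the simple graph `G`: each edge of `G` receives exactly one
direction, and the arcs of `D` are exactly the directed edges of `G`. -/
def IsOrientation {V : Type*} (G : SimpleGraph V) (D : V → V → Prop) : Prop :=
  (∀ u v, D u v → G.Adj u v) ∧
  (∀ u v, G.Adj u v → (D u v ∨ D v u)) ∧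
  (∀ u v, D u v → ¬ D v u)

/-- An energy orientation of `G` is an orientation whose resulting digraph is acyclic,
i.e. contains no directed cycle. -/
def IsEnergyOrientation {V : Type*} (G : SimpleGraph V) (D : V → V → Prop) : Prop :=
  IsOrientation G D ∧ ∀ v, ¬ Relation.TransGen D v v

/-- A source of the digraph `D` is a vertex of in-degree `0`. -/
def IsSource {V : Type*} (D : V → V → Prop) (s : V) : Prop :=
  ∀ u, ¬ D u s

/-- `StepsTo D k u v` means there is a directed walk of length `k` from `u` to `v` in `D`. -/
def StepsTo {V : Type*} (D : V → V → Prop) : ℕ → V → V → Prop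
  | 0, u, v => u = v
  | k + 1, u, v => ∃ w, D u w ∧ StepsTo D k w v

/-- `edist D v` is the minimum, over all sources `s` of `D`, of the length of a shortest
directed path from `s` to `v`. -/
noncomputable def edist {V : Type*} (D : V → V → Prop) (v : V) : ℕ :=
  sInf {k : ℕ | ∃ s, IsSource D s ∧ StepsTo D k s v}

/-- An arc `(u, v)` of `D` is a black arc if it lies on no shortest directed path from a source
to `v`, equivalently if `edist D v ≠ edist D u + 1`. -/
def IsBlackArc {V : Type*} (D : V → V → Prop) (u v : V) : Prop :=
  D u v ∧ edist D v ≠ edist D u + 1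

/-- The number of black arcs of the digraph `D`. -/
noncomputable def blackArcCount {V : Type*} (D : V → V → Prop) : ℕ :=
  Set.ncard {p : V × V | IsBlackArc D p.1 p.2}

/-- The black arc number `b•(G)`: the minimum number of black arcs over all energy
orientations of `G`. -/
noncomputable def blackArcNumber {V : Type*} (G : SimpleGraph V) : ℕ :=
  sInf {k : ℕ | ∃ D : V → V → Prop, IsEnergyOrientation G D ∧ blackArcCount D = k}

/-!
Graphs without odd cycles are exactly the 2-colourable ones. Orient every edge from colour `0`
to colour `1`: then every arc leaves a source, so the orientation is acyclic, the sources have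
`edist = 0`, every head of an arc has `edist = 1`, and no arc is black.
-/

namespace SimpleGraph.Walk

variable {V : Type*} {G : SimpleGraph V}

theorem exists_loop_of_not_isPath {u v : V} (p : G.Walk u v) (hp : ¬p.IsPath) :
    ∃ (w : V) (p₁ : G.Walk u w) (c : G.Walk w w) (p₂ : G.Walk w v),
      c.length ≠ 0 ∧ p.length = p₁.length + c.length + p₂.length := by
  classical
  induction p with
  | nil => exact absurd IsPath.nil hp
  | @cons u x v h p ih =>
    by_cases hpath : p.IsPath
    · have hu : u ∈ p.support := by simpa [cons_isPath_iff, hpath] using hp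
      refine ⟨u, nil, cons h (p.takeUntil u hu), p.dropUntil u hu, by simp, ?_⟩
      conv_lhs => rw [length_cons, ← p.take_spec hu, length_append]
      simp only [length_nil, length_cons]
      omega
    · obtain ⟨w, p₁, c, p₂, hc, hlen⟩ := ih hpath
      exact ⟨w, cons h p₁, c, p₂, hc, by simp only [length_cons, hlen]; omega⟩

theorem exists_isCycle_odd_length {u : V} (p : G.Walk u u) (hp : Odd p.length) :
    ∃ (v : V) (c : G.Walk v v), c.IsCycle ∧ Odd c.length := by
  induction hn : p.length using Nat.strong_induction_on generalizing u with
  | _ n ih =>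
  cases p with
  | nil => simp at hp
  | cons h q =>
    by_cases hq : q.IsPath
    · refine ⟨u, cons h q, (cons_isCycle_iff q h).2 ⟨hq, fun he => ?_⟩, hp⟩
      have := hq.length_eq_one_of_mem_edges (Sym2.eq_swap ▸ he)
      exact absurd hp (by simp [this])
    · -- Cutting out the loop `c` splits `p` into two shorter closed walks, one of them odd.
      obtain ⟨w, q₁, c, q₂, hc, hlen⟩ := q.exists_loop_of_not_isPath hq
      have hsplit : (cons h (q₁.append q₂)).length + c.length = n := by
        simp only [← hn, length_cons, length_append, hlen]
        omega
      have hpos : (cons h (q₁.append q₂)).length ≠ 0 := by simp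
      rcases Nat.even_or_odd c.length with hce | hco
      · rw [hn, ← hsplit] at hp
        exact ih _ (by omega) _ (Nat.odd_add.1 hp |>.2 hce) rfl
      · exact ih _ (by omega) c hco rfl

end SimpleGraph.Walk

theorem SimpleGraph.colorable_two_of_forall_isCycle_not_odd {V : Type*} {G : SimpleGraph V}
    (h : ∀ (v : V) (c : G.Walk v v), c.IsCycle → ¬Odd c.length) : G.Colorable 2 :=
  two_colorable_iff_forall_loop_even.2 fun _ p => Nat.not_odd_iff_even.1 fun hp =>
    let ⟨v, c, hc, hodd⟩ := p.exists_isCycle_odd_length hp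
    h v c hc hodd

section ArcsFromSources

variable {V : Type*} {D : V → V → Prop}

theorem edist_eq_zero_of_isSource {v : V} (hv : IsSource D v) : edist D v = 0 :=
  Nat.sInf_eq_zero.2 (Or.inl ⟨v, hv, rfl⟩)

theorem edist_eq_one_of_isSource {u v : V} (hu : IsSource D u) (huv : D u v) :
    edist D v = 1 := by
  have h1 : 1 ∈ {k | ∃ s, IsSource D s ∧ StepsTo D k s v} := ⟨u, hu, v, huv, rfl⟩
  have h0 : 0 ∉ {k | ∃ s, IsSource D s ∧ StepsTo D k s v} := by
    rintro ⟨s, hs, rfl⟩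
    exact hs u huv
  exact le_antisymm (Nat.sInf_le h1)
    (Nat.one_le_iff_ne_zero.2 fun h => h0 (h ▸ Nat.sInf_mem ⟨1, h1⟩))

variable (hD : ∀ u v, D u v → IsSource D u)
include hD

theorem not_transGen_self_of_forall_isSource (v : V) : ¬Relation.TransGen D v v := by
  intro hcyc
  obtain ⟨w, hvw, -⟩ := Relation.TransGen.head'_iff.1 hcyc
  obtain ⟨x, -, hxv⟩ := Relation.TransGen.tail'_iff.1 hcyc
  exact hD v w hvw x hxv

theorem blackArcCount_eq_zero_of_forall_isSource : blackArcCount D = 0 := by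
  have : {p : V × V | IsBlackArc D p.1 p.2} = ∅ := by
    refine Set.eq_empty_iff_forall_notMem.2 fun ⟨u, v⟩ ⟨huv, hblack⟩ => hblack ?_
    rw [edist_eq_one_of_isSource (hD u v huv) huv, edist_eq_zero_of_isSource (hD u v huv)]
  rw [blackArcCount, this, Set.ncard_empty]

end ArcsFromSources

namespace SimpleGraph.Coloring

variable {V : Type*} {G : SimpleGraph V} (c : G.Coloring (Fin 2))

def bipartiteOrientation (u v : V) : Prop :=
  G.Adj u v ∧ c u = 0 ∧ c v = 1

theorem isSource_of_bipartiteOrientation {u v : V} (huv : c.bipartiteOrientation u v) :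
    IsSource c.bipartiteOrientation u :=
  fun _ hwu => zero_ne_one (huv.2.1.symm.trans hwu.2.2)

theorem isEnergyOrientation_bipartiteOrientation :
    IsEnergyOrientation G c.bipartiteOrientation := by
  refine ⟨⟨fun _ _ huv => huv.1, fun u v huv => ?_,
    fun _ v huv => c.isSource_of_bipartiteOrientation huv v⟩,
    not_transGen_self_of_forall_isSource fun _ _ => c.isSource_of_bipartiteOrientation⟩
  have hcolours : (c u = 0 ∧ c v = 1) ∨ (c v = 0 ∧ c u = 1) := by
    have := c.valid huv
    omega
  exact hcolours.imp (⟨huv, ·⟩) (⟨huv.symm, ·⟩)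

theorem blackArcCount_bipartiteOrientation : blackArcCount c.bipartiteOrientation = 0 :=
  blackArcCount_eq_zero_of_forall_isSource fun _ _ => c.isSource_of_bipartiteOrientation

end SimpleGraph.Coloring

theorem blackArcNumber_eq_zero_of_isEnergyOrientation {V : Type*} {G : SimpleGraph V}
    {D : V → V → Prop} (hD : IsEnergyOrientation G D) (h0 : blackArcCount D = 0) :
    blackArcNumber G = 0 :=
  Nat.sInf_eq_zero.2 (Or.inl ⟨D, hD, h0⟩)

theorem no_odd_cycle_blackArcNumber_general {V : Type*} (G : SimpleGraph V)
    (hodd : ∀ (v : V) (c : G.Walk v v), c.IsCycle → ¬ Odd c.length) :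
    blackArcNumber G = 0 ∧
    ∃ D : V → V → Prop, IsEnergyOrientation G D ∧ blackArcCount D = 0 := by
  obtain ⟨c⟩ := SimpleGraph.colorable_two_of_forall_isCycle_not_odd hodd
  have hD := c.isEnergyOrientation_bipartiteOrientation
  have h0 := c.blackArcCount_bipartiteOrientation
  exact ⟨blackArcNumber_eq_zero_of_isEnergyOrientation hD h0, _, hD, h0⟩

/-- Every simple connected graph `G` of order `n ≥ 2` containing no cycle of
odd length (equivalently, bipartite) satisfies `b•(G) = 0`; that is, `G` admits an energy
orientation with no black arcs. -/
theorem no_odd_cycle_blackArcNumber {V : Type*} [Fintype V] (G : SimpleGraph V)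
    (h2 : 2 ≤ Fintype.card V) (hconn : G.Connected)
    (hodd : ∀ (v : V) (c : G.Walk v v), c.IsCycle → ¬ Odd c.length) :
    blackArcNumber G = 0 ∧
    ∃ D : V → V → Prop, IsEnergyOrientation G D ∧ blackArcCount D = 0 :=
  no_odd_cycle_blackArcNumber_general G hodd
end

section
/- Let (a_i)_{i≥1} be a sequence of non-negative integers and n ≥ 2, and let G_1, …, G_{n−1} and B_1, …, B_{n−1} be as produced by the Jaco-type Black Arc Algorithm applied to J_n((a_i)). Then the black arc number satisfies b•(J_n((a_i))) = Σ_{i=1}^{n−1} h^p_{G_i*}(i), where G_i* denotes the underlying simple undirected graph of G_i and h^p_{G_i*}(i) is the primitive hole degree of vertex i in G_i*, i.e., the number of triangles of G_i* containing vertex i. -/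
/-- The arc relation of the finite Jaco-type graph `J_n((a_i))`: the vertices are
`1, 2, …, n ∈ ℕ` and `(i, j)` is an arc iff `1 ≤ i < j ≤ n` and `j ≤ i + a_i`. -/
def JacoArc (a : ℕ → ℕ) (n i j : ℕ) : Prop :=
  1 ≤ i ∧ i < j ∧ j ≤ n ∧ j ≤ i + a i

/-- The arc set of the finite Jaco-type graph `J_n((a_i))`, as a set of ordered pairs. -/
def jacoArcSet (a : ℕ → ℕ) (n : ℕ) : Set (ℕ × ℕ) :=
  {p : ℕ × ℕ | JacoArc a n p.1 p.2}

/-- Given an arc set `A`, `blackAt i A` is the set of arcs of `A` both of whose endpoints are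
out-neighbours of vertex `i` in `A` (the arcs of the subgraph induced by the
out-neighbourhood of `i`). -/
def blackAt (i : ℕ) (A : Set (ℕ × ℕ)) : Set (ℕ × ℕ) :=
  {p ∈ A | (i, p.1) ∈ A ∧ (i, p.2) ∈ A}

/-- The Jaco-type Black Arc Algorithm: `algG A m` is the arc set `G_{m+1}` obtained from
`G_1 = A` by deleting, for `i = 1, …, m`, the arc set `B_i = blackAt i G_i` at step `i`. -/
def algG (A : Set (ℕ × ℕ)) : ℕ → Set (ℕ × ℕ)
  | 0 => A
  | m + 1 => algG A m \ blackAt (m + 1) (algG A m)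

/-- The set of black arcs output by the Jaco-type Black Arc Algorithm on an arc set `A` with
`n` vertices: `B = B_1 ∪ ⋯ ∪ B_{n−1}` where `B_i = blackAt i G_i` and `G_i = algG A (i−1)`. -/
def blackSet (A : Set (ℕ × ℕ)) (n : ℕ) : Set (ℕ × ℕ) :=
  ⋃ i ∈ Finset.Icc 1 (n - 1), blackAt i (algG A (i - 1))

/-- The adjacency relation of the underlying simple undirected graph of an arc set `A`. -/
def UndAdj (A : Set (ℕ × ℕ)) (u v : ℕ) : Prop :=
  (u, v) ∈ A ∨ (v, u) ∈ A

/-- The primitive hole degree `h^p_{A*}(v)`: the number of triangles containing vertex `v` in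
the underlying undirected graph of the arc set `A` (each triangle `{v, u, w}` counted once,
via its pair `u < w`). -/
noncomputable def primitiveHoleDegree (A : Set (ℕ × ℕ)) (v : ℕ) : ℕ :=
  Set.ncard {p : ℕ × ℕ | p.1 < p.2 ∧ UndAdj A v p.1 ∧ UndAdj A v p.2 ∧ UndAdj A p.1 p.2}

/-!
Since every arc points from a smaller to a larger vertex, a triangle of `G_i*` through `i` whose
smallest vertex `u` is not `i` satisfies `u < i`; at step `u` its arc opposite `u` was black, so
no such triangle survives in `G_i`. The triangles through `i` are therefore exactly the arcs of
`G_i` joining two out-neighbours of `i`, i.e. `|B_i| = h^p_{G_i*}(i)`. The sets `B_i` are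
pairwise disjoint, because `B_i` is deleted before any later `G_j` is formed.
-/

namespace UndAdj

variable {A : Set (ℕ × ℕ)} {u v : ℕ}

lemma symm (h : UndAdj A u v) : UndAdj A v u := Or.symm h

lemma mem_of_lt (hA : ∀ p ∈ A, p.1 < p.2) (h : UndAdj A u v) (huv : u < v) : (u, v) ∈ A :=
  h.resolve_right fun hvu => (hA _ hvu).asymm huv

lemma irrefl (hA : ∀ p ∈ A, p.1 < p.2) : ¬ UndAdj A u u := fun h =>
  (hA _ (h.elim id id)).false

end UndAdj

section BlackArcAlgorithm

variable {A : Set (ℕ × ℕ)}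

lemma algG_antitone : Antitone (algG A) :=
  antitone_nat_of_succ_le fun _ => Set.sdiff_subset

lemma algG_subset (m : ℕ) : algG A m ⊆ A :=
  algG_antitone (Nat.zero_le m)

lemma disjoint_blackAt_algG_succ (m : ℕ) :
    Disjoint (blackAt (m + 1) (algG A m)) (algG A (m + 1)) :=
  Set.disjoint_sdiff_right

lemma pairwiseDisjoint_blackAt_algG :
    (Set.Ici 1).PairwiseDisjoint fun i => blackAt i (algG A (i - 1)) := by
  suffices key : ∀ i j, 1 ≤ i → i < j →
      Disjoint (blackAt i (algG A (i - 1))) (blackAt j (algG A (j - 1))) by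
    intro i hi j hj hij
    rcases hij.lt_or_gt with h | h
    · exact key i j hi h
    · exact (key j i hj h).symm
  intro i j hi hij
  obtain ⟨m, rfl⟩ : ∃ m, i = m + 1 := ⟨i - 1, by omega⟩
  refine (disjoint_blackAt_algG_succ m).mono_right ?_
  exact Set.sep_subset _ _ |>.trans (algG_antitone (by omega))

lemma not_undAdj_of_mem_algG {m u v w : ℕ} (hu : 0 < u) (hum : u ≤ m)
    (huv : (u, v) ∈ algG A m) (huw : (u, w) ∈ algG A m) : ¬ UndAdj (algG A m) v w := by
  obtain ⟨k, rfl⟩ : ∃ k, u = k + 1 := ⟨u - 1, by omega⟩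
  have hle : algG A m ⊆ algG A k := algG_antitone (by omega)
  have hgone : algG A m ⊆ algG A (k + 1) := algG_antitone hum
  -- at step `u` the arc joining `v` and `w` lay in the out-neighbourhood of `u`
  rintro (hvw | hwv)
  · exact (hgone hvw).2 ⟨hle hvw, hle huv, hle huw⟩
  · exact (hgone hwv).2 ⟨hle hwv, hle huw, hle huv⟩

lemma blackAt_algG_eq_triangles (hA : ∀ p ∈ A, 0 < p.1 ∧ p.1 < p.2) (i : ℕ) :
    blackAt i (algG A (i - 1)) =
      {p : ℕ × ℕ | p.1 < p.2 ∧ UndAdj (algG A (i - 1)) i p.1 ∧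
        UndAdj (algG A (i - 1)) i p.2 ∧ UndAdj (algG A (i - 1)) p.1 p.2} := by
  set G := algG A (i - 1)
  have hG : ∀ p ∈ G, p.1 < p.2 := fun p hp => (hA p (algG_subset _ hp)).2
  ext ⟨u, w⟩
  constructor
  · rintro ⟨huw, hiu, hiw⟩
    exact ⟨hG _ huw, .inl hiu, .inl hiw, .inl huw⟩
  · rintro ⟨huw, hiu, hiw, huw'⟩
    have huwG : (u, w) ∈ G := huw'.mem_of_lt hG huw
    rcases lt_trichotomy i u with hlt | rfl | hgt
    · exact ⟨huwG, hiu.mem_of_lt hG hlt, hiw.mem_of_lt hG (hlt.trans huw)⟩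
    · exact (UndAdj.irrefl hG hiu).elim
    · exact (not_undAdj_of_mem_algG (hA _ (algG_subset _ huwG)).1 (by omega)
        (hiu.symm.mem_of_lt hG hgt) huwG hiw).elim

end BlackArcAlgorithm

lemma jacoArcSet_finite (a : ℕ → ℕ) (n : ℕ) : (jacoArcSet a n).Finite :=
  (Set.finite_Iic (n, n)).subset fun _ ⟨_, _, hn, _⟩ => ⟨by omega, hn⟩

lemma jacoArcSet_forward (a : ℕ → ℕ) (n : ℕ) : ∀ p ∈ jacoArcSet a n, 0 < p.1 ∧ p.1 < p.2 :=
  fun _ ⟨h1, h2, _⟩ => ⟨h1, h2⟩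

theorem blackArcNumber_eq_sum_primitiveHoleDegree_general (a : ℕ → ℕ) (n : ℕ) :
    Set.ncard (blackSet (jacoArcSet a n) n) =
      ∑ i ∈ Finset.Icc 1 (n - 1), primitiveHoleDegree (algG (jacoArcSet a n) (i - 1)) i := by
  have hfin : ∀ i ∈ (Finset.Icc 1 (n - 1) : Set ℕ),
      (blackAt i (algG (jacoArcSet a n) (i - 1))).Finite := fun i _ =>
    (jacoArcSet_finite a n).subset ((Set.sep_subset _ _).trans (algG_subset _))
  have hdisj : (Finset.Icc 1 (n - 1) : Set ℕ).PairwiseDisjoint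
      fun i => blackAt i (algG (jacoArcSet a n) (i - 1)) :=
    pairwiseDisjoint_blackAt_algG.subset fun i hi => (Finset.mem_Icc.mp hi).1
  rw [blackSet, ← Finset.set_biUnion_coe, (Finset.finite_toSet _).ncard_biUnion hfin hdisj,
    finsum_mem_coe_finset]
  exact Finset.sum_congr rfl fun i _ => by
    rw [blackAt_algG_eq_triangles (jacoArcSet_forward a n), primitiveHoleDegree]

/-- For a sequence `(a_i)` of non-negative integers and `n ≥ 2`, with
`G_1, …, G_{n−1}` and `B_1, …, B_{n−1}` produced by the Jaco-type Black Arc Algorithm applied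
to `J_n((a_i))`, the black arc number satisfies
`b•(J_n((a_i))) = Σ_{i=1}^{n−1} h^p_{G_i*}(i)`, where `G_i* = algG _ (i−1)` viewed as an
undirected graph and `h^p` counts triangles through the vertex `i`. -/
theorem blackArcNumber_eq_sum_primitiveHoleDegree (a : ℕ → ℕ) (n : ℕ) (hn : 2 ≤ n) :
    Set.ncard (blackSet (jacoArcSet a n) n) =
      ∑ i ∈ Finset.Icc 1 (n - 1), primitiveHoleDegree (algG (jacoArcSet a n) (i - 1)) i :=
  blackArcNumber_eq_sum_primitiveHoleDegree_general a n
end
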